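/- Let X ∈ 𝔻ℙ_n, let Z ∈ ℝ^{n×n} be arbitrary, and suppose α, β ∈ ℝⁿ satisfy the linear system Z𝟙 = α + Xβ and Zᵀ𝟙 = Xᵀα + β. Define Π_X(Z) = Z − (α𝟙ᵀ + 𝟙βᵀ) ⊙ X. Then (i) Π_X(Z)𝟙 = 0 and Π_X(Z)ᵀ𝟙 = 0, i.e. Π_X(Z) lies in the tangent space of 𝔻ℙ_n at X; and (ii) the residual Z − Π_X(Z) is orthogonal, in the Fisher metric at X, to every matrix W with W𝟙 = 0 and Wᵀ𝟙 = 0. Hence Π_X is the orthogonal projection onto the tangent space with respect to the Fisher metric. -/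

import Mathlib

open Matrix

/-! Summing the entries of `(α𝟙ᵀ + 𝟙βᵀ) ⊙ X` along rows gives `α + Xβ` when `X𝟙 = 𝟙`, and
along columns gives `Xᵀα + β` when `Xᵀ𝟙 = 𝟙`; so the linear system for `α, β` says exactly that
`Π_X(Z)` has zero row and column sums. In the Fisher metric the division by `X` cancels the
Hadamard factor of the residual, leaving the Frobenius pairing of `α𝟙ᵀ + 𝟙βᵀ` with `W`, which is
`⟨α, W𝟙⟩ + ⟨β, Wᵀ𝟙⟩ = 0`. -/

section
variable {m n R : Type*}

theorem hadamard_vecMulVec_add_mulVec_one [Fintype n] [CommSemiring R] (α : m → R) (β : n → R)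
    (X : Matrix m n R) :
    ((vecMulVec α 1 + vecMulVec 1 β) ⊙ X) *ᵥ 1 = α * (X *ᵥ 1) + X *ᵥ β := by
  funext i
  simp only [mulVec, dotProduct, hadamard_apply, Matrix.add_apply, vecMulVec_apply, Pi.one_apply,
    Pi.add_apply, Pi.mul_apply, add_mul, mul_one, one_mul, Finset.sum_add_distrib,
    Finset.mul_sum, mul_comm (β _)]

theorem sum_sum_vecMulVec_add_mul [Fintype m] [Fintype n] [CommSemiring R] (α : m → R)
    (β : n → R) (W : Matrix m n R) :
    ∑ i, ∑ j, (vecMulVec α 1 + vecMulVec 1 β : Matrix m n R) i j * W i j =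
      α ⬝ᵥ (W *ᵥ 1) + β ⬝ᵥ (Wᵀ *ᵥ 1) := by
  simp only [dotProduct, mulVec, Matrix.add_apply, vecMulVec_apply, Pi.one_apply, mul_one,
    one_mul, transpose_apply, add_mul, Finset.sum_add_distrib, Finset.mul_sum]
  rw [Finset.sum_comm (f := fun i j => β j * W i j)]

theorem sum_sum_vecMulVec_add_mul_eq_zero [Fintype m] [Fintype n] [CommSemiring R]
    (α : m → R) (β : n → R) {W : Matrix m n R} (hW : W *ᵥ 1 = 0) (hWt : Wᵀ *ᵥ 1 = 0) :
    ∑ i, ∑ j, (vecMulVec α 1 + vecMulVec 1 β : Matrix m n R) i j * W i j = 0 := by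
  rw [sum_sum_vecMulVec_add_mul, hW, hWt, dotProduct_zero, dotProduct_zero, add_zero]

theorem sum_sum_hadamard_mul_div [Fintype m] [Fintype n] [Field R] (A W X : Matrix m n R)
    (hX : ∀ i j, X i j ≠ 0) :
    ∑ i, ∑ j, (A ⊙ X) i j * W i j / X i j = ∑ i, ∑ j, A i j * W i j := by
  refine Finset.sum_congr rfl fun i _ => Finset.sum_congr rfl fun j _ => ?_
  rw [hadamard_apply, mul_right_comm, mul_div_cancel_right₀ _ (hX i j)]

theorem sub_hadamard_vecMulVec_add_mulVec_one_eq_zero [Fintype n] [CommRing R]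
    {Z X : Matrix m n R} {α : m → R} {β : n → R} (hX : X *ᵥ 1 = 1)
    (hZ : Z *ᵥ 1 = α + X *ᵥ β) :
    (Z - (vecMulVec α 1 + vecMulVec 1 β) ⊙ X) *ᵥ 1 = 0 := by
  rw [sub_mulVec, hadamard_vecMulVec_add_mulVec_one, hX, mul_one, hZ, sub_self]

theorem transpose_sub_hadamard_vecMulVec_add_mulVec_one_eq_zero [Fintype m] [CommRing R]
    {Z X : Matrix m n R} {α : m → R} {β : n → R} (hX : Xᵀ *ᵥ 1 = 1)
    (hZ : Zᵀ *ᵥ 1 = Xᵀ *ᵥ α + β) :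
    (Z - (vecMulVec α 1 + vecMulVec 1 β) ⊙ X)ᵀ *ᵥ 1 = 0 := by
  rw [transpose_sub, transpose_hadamard, transpose_add, transpose_vecMulVec, transpose_vecMulVec,
    add_comm (vecMulVec 1 α)]
  exact sub_hadamard_vecMulVec_add_mulVec_one_eq_zero hX (hZ.trans (add_comm _ _))

end

/-- Characterization of the orthogonal projection onto the tangent space of
the doubly stochastic multinomial manifold at `X ∈ 𝔻ℙ_n` with respect to the
Fisher metric: given `Z` and `α, β` solving the linear system
`Z𝟙 = α + Xβ`, `Zᵀ𝟙 = Xᵀα + β`, the matrix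
`Π_X(Z) = Z − (α𝟙ᵀ + 𝟙βᵀ) ⊙ X` lies in the tangent space and the residual
`Z − Π_X(Z)` is Fisher-orthogonal to every tangent vector. -/
theorem projection_tangent_doubly_stochastic (n : ℕ)
    (X : Matrix (Fin n) (Fin n) ℝ)
    (hXpos : ∀ i j, 0 < X i j)
    (hXrow : X.mulVec (fun _ => (1 : ℝ)) = fun _ => (1 : ℝ))
    (hXcol : Xᵀ.mulVec (fun _ => (1 : ℝ)) = fun _ => (1 : ℝ))
    (Z : Matrix (Fin n) (Fin n) ℝ) (α β : Fin n → ℝ)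
    (hα : Z.mulVec (fun _ => (1 : ℝ)) = α + X.mulVec β)
    (hβ : Zᵀ.mulVec (fun _ => (1 : ℝ)) = Xᵀ.mulVec α + β) :
    (Z - Matrix.hadamard
        (Matrix.vecMulVec α (fun _ => (1 : ℝ)) +
          Matrix.vecMulVec (fun _ => (1 : ℝ)) β) X).mulVec (fun _ => (1 : ℝ)) = 0 ∧
    (Z - Matrix.hadamard
        (Matrix.vecMulVec α (fun _ => (1 : ℝ)) +
          Matrix.vecMulVec (fun _ => (1 : ℝ)) β) X)ᵀ.mulVec (fun _ => (1 : ℝ)) = 0 ∧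
    ∀ W : Matrix (Fin n) (Fin n) ℝ,
      W.mulVec (fun _ => (1 : ℝ)) = 0 → Wᵀ.mulVec (fun _ => (1 : ℝ)) = 0 →
      ∑ i, ∑ j,
        ((Z - (Z - Matrix.hadamard
            (Matrix.vecMulVec α (fun _ => (1 : ℝ)) +
              Matrix.vecMulVec (fun _ => (1 : ℝ)) β) X)) i j * W i j) / X i j = 0 := by
  refine ⟨sub_hadamard_vecMulVec_add_mulVec_one_eq_zero hXrow hα,
    transpose_sub_hadamard_vecMulVec_add_mulVec_one_eq_zero hXcol hβ, fun W hW hWt => ?_⟩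
  rw [sub_sub_cancel, sum_sum_hadamard_mul_div _ _ _ fun i j => (hXpos i j).ne']
  exact sum_sum_vecMulVec_add_mul_eq_zero α β hW hWt
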